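/- (Corollary 2, samplewise fast-rate average bound) In the random-subset setting, let λ, γ > 0 satisfy λ(1−γ) + (e^λ − 1 − λ)(1 + γ²) ≤ 0. Then the average population loss satisfies E_{P_{WZ̃S}}[L_{P_Z}(W)] ≤ γ·E_{P_{WZ̃S}}[L_{Z(S)}(W)] + Σᵢ₌₁ⁿ I(W; Sᵢ | Z̃)/(λn), where I(W; Sᵢ | Z̃) denotes the conditional mutual information between W and Sᵢ given Z̃. -/

import Mathlib

open MeasureTheory ProbabilityTheory Real
open scoped ENNReal NNReal

noncomputable section

/-- Fair coin (`Bernoulli(1/2)`) distribution on `Bool`. -/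
def coin : Measure Bool := (PMF.uniformOfFintype Bool).toMeasure

instance : IsProbabilityMeasure coin := PMF.toMeasure.isProbabilityMeasure _

/-- Relative entropy (KL divergence) `∫ log (dμ/dν) dμ`. -/
def klDiv' {α : Type*} [MeasurableSpace α] (μ ν : Measure α) : ℝ :=
  ∫ x, Real.log ((μ.rnDeriv ν x).toReal) ∂μ

/-- Training loss in the random-subset setting. -/
def trainLoss {Z W : Type*} (n : ℕ) (loss : W → Z → ℝ)
    (x : ((Fin n × Bool → Z) × (Fin n → Bool)) × W) : ℝ :=
  (∑ i, loss x.2 (x.1.1 (i, x.1.2 i))) / n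

/-- Test loss in the random-subset setting. -/
def testLoss {Z W : Type*} (n : ℕ) (loss : W → Z → ℝ)
    (x : ((Fin n × Bool → Z) × (Fin n → Bool)) × W) : ℝ :=
  (∑ i, loss x.2 (x.1.1 (i, !x.1.2 i))) / n

/-- Population loss. -/
def popLoss {Z W : Type*} [MeasurableSpace Z] (PZ : Measure Z)
    (loss : W → Z → ℝ) (w : W) : ℝ :=
  ∫ z, loss w z ∂PZ

set_option linter.unnecessarySeqFocus false


/-- remainder series `∑ x^k/(k+2)!` -/
def seriesG (x : ℝ) : ℝ := ∑' k : ℕ, x ^ k / (k + 2).factorial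

lemma summable_seriesG (x : ℝ) : Summable (fun k : ℕ => x ^ k / (k + 2).factorial) := by
  refine Summable.of_norm ?_
  have h := Real.summable_pow_div_factorial |x|
  refine h.of_nonneg_of_le (fun k => norm_nonneg _) (fun k => ?_)
  have hgoal : ‖x ^ k / ((k + 2).factorial : ℝ)‖ = |x| ^ k / ((k + 2).factorial : ℝ) := by
    rw [norm_div, norm_pow, Real.norm_eq_abs, Real.norm_natCast]
  rw [hgoal]
  refine div_le_div_of_nonneg_left (by positivity) (by positivity) ?_
  exact_mod_cast Nat.factorial_le (by omega)

lemma exp_eq_seriesG (x : ℝ) : Real.exp x = 1 + x + x ^ 2 * seriesG x := by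
  have hsum : ∑' n : ℕ, x ^ n / n.factorial = Real.exp x := by
    rw [Real.exp_eq_exp_ℝ, NormedSpace.exp_eq_tsum_div]
  have h0 : Summable (fun n : ℕ => x ^ n / n.factorial) := Real.summable_pow_div_factorial x
  have h1 : Summable (fun n : ℕ => x ^ (n+1) / (n+1).factorial) := by
    exact_mod_cast (summable_nat_add_iff 1).2 h0
  rw [← hsum, Summable.tsum_eq_zero_add h0, Summable.tsum_eq_zero_add h1]
  have h2 : ∑' n : ℕ, x ^ (n+1+1) / (n+1+1).factorial = x ^ 2 * seriesG x := by
    rw [seriesG, ← tsum_mul_left]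
    refine tsum_congr (fun k => ?_)
    have hk : k + 1 + 1 = k + 2 := by ring
    rw [hk, pow_add]
    ring
  rw [h2]
  simp [Nat.factorial]
  ring

lemma seriesG_zero : seriesG 0 = 1 / 2 := by
  rw [seriesG, tsum_eq_single 0 (fun k hk => by simp [zero_pow hk])]
  norm_num [Nat.factorial]

lemma seriesG_mono {x y : ℝ} (hx : 0 ≤ x) (hxy : x ≤ y) : seriesG x ≤ seriesG y := by
  refine Summable.tsum_le_tsum (fun k => ?_) (summable_seriesG x) (summable_seriesG y)
  gcongr

/-- for `x ≤ 0`, `exp x ≤ 1 + x + x²/2` -/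
lemma exp_le_quad_of_nonpos {x : ℝ} (hx : x ≤ 0) : Real.exp x ≤ 1 + x + x ^ 2 / 2 := by
  set φ : ℝ → ℝ := fun t => 1 + t + t ^ 2 / 2 - Real.exp t with hφ
  have hderiv : ∀ t : ℝ, HasDerivAt φ (1 + t - Real.exp t) t := by
    intro t
    have h1 : HasDerivAt (fun t : ℝ => 1 + t + t ^ 2 / 2) (1 + t) t := by
      have h := ((hasDerivAt_id t).const_add (1:ℝ)).add ((hasDerivAt_pow 2 t).div_const 2)
      exact h.congr_deriv (by norm_num)
    exact h1.sub (Real.hasDerivAt_exp t)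
  have hanti : AntitoneOn φ (Set.Iic 0) := by
    refine antitoneOn_of_deriv_nonpos (convex_Iic 0) ?_ ?_ ?_
    · exact Continuous.continuousOn (by fun_prop)
    · intro t _
      exact (hderiv t).differentiableAt.differentiableWithinAt
    · intro t _
      rw [(hderiv t).deriv]
      have := Real.add_one_le_exp t
      linarith
  have key : φ 0 ≤ φ x := hanti hx (by simp) hx
  simp only [hφ] at key
  simp at key
  linarith [key]

/-- main exponential quadratic bound -/
lemma exp_quad {lam x : ℝ} (hlam : 0 < lam) (hx : x ≤ lam) :
    Real.exp x ≤ 1 + x + (Real.exp lam - 1 - lam) * (x / lam) ^ 2 := by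
  have hGlam : Real.exp lam - 1 - lam = lam ^ 2 * seriesG lam := by
    have := exp_eq_seriesG lam; linarith
  have heq : (Real.exp lam - 1 - lam) * (x / lam) ^ 2 = x ^ 2 * seriesG lam := by
    rw [hGlam]; field_simp
  rcases le_or_gt 0 x with hx0 | hx0
  · have hexp := exp_eq_seriesG x
    have hmono := seriesG_mono hx0 hx
    have hx2 : x ^ 2 * seriesG x ≤ x ^ 2 * seriesG lam :=
      mul_le_mul_of_nonneg_left hmono (by positivity)
    linarith
  · have h1 : Real.exp x ≤ 1 + x + x ^ 2 / 2 := exp_le_quad_of_nonpos hx0.le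
    have h2 : (1:ℝ)/2 ≤ seriesG lam := seriesG_zero ▸ seriesG_mono le_rfl hlam.le
    nlinarith [sq_nonneg x]

/-- the key two-point lemma -/
lemma key_scalar {lam gam a b : ℝ} (hlam : 0 < lam) (hgam : 0 < gam)
    (hcond : lam * (1 - gam) + (Real.exp lam - 1 - lam) * (1 + gam ^ 2) ≤ 0)
    (ha : a ∈ Set.Icc (0:ℝ) 1) (hb : b ∈ Set.Icc (0:ℝ) 1) :
    (Real.exp (lam * (a - gam * b)) + Real.exp (lam * (b - gam * a))) / 2 ≤ 1 := by
  obtain ⟨ha0, ha1⟩ := ha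
  obtain ⟨hb0, hb1⟩ := hb
  set c := Real.exp lam - 1 - lam with hc
  have hc0 : 0 ≤ c := by have := Real.add_one_le_exp lam; simp only [hc]; linarith
  have hx1 : lam * (a - gam * b) ≤ lam := by
    have h : a - gam * b ≤ 1 := by nlinarith [mul_nonneg hgam.le hb0]
    nlinarith
  have hx2 : lam * (b - gam * a) ≤ lam := by
    have h : b - gam * a ≤ 1 := by nlinarith [mul_nonneg hgam.le ha0]
    nlinarith
  have e1 : Real.exp (lam * (a - gam * b)) ≤
      1 + lam * (a - gam * b) + c * (a - gam * b) ^ 2 := by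
    have h := exp_quad hlam hx1
    rw [mul_div_cancel_left₀ _ hlam.ne'] at h; exact h
  have e2 : Real.exp (lam * (b - gam * a)) ≤
      1 + lam * (b - gam * a) + c * (b - gam * a) ^ 2 := by
    have h := exp_quad hlam hx2
    rw [mul_div_cancel_left₀ _ hlam.ne'] at h; exact h
  have hab : a ^ 2 + b ^ 2 ≤ a + b := by nlinarith
  have h1 : c * (1 + gam ^ 2) * (a ^ 2 + b ^ 2) ≤ c * (1 + gam ^ 2) * (a + b) :=
    mul_le_mul_of_nonneg_left hab (by positivity)
  have hprod : 0 ≤ (a + b) * (-(lam * (1 - gam) + c * (1 + gam ^ 2))) :=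
    mul_nonneg (add_nonneg ha0 hb0) (neg_nonneg.2 hcond)
  have h3 : 0 ≤ c * gam * (a * b) :=
    mul_nonneg (mul_nonneg hc0 hgam.le) (mul_nonneg ha0 hb0)
  nlinarith [e1, e2, h1, hprod, h3]

lemma int_of_bdd' {α : Type*} [MeasurableSpace α] {μ : Measure α} [IsFiniteMeasure μ]
    {f : α → ℝ} (hm : AEStronglyMeasurable f μ) {C : ℝ} (h : ∀ᵐ x ∂μ, |f x| ≤ C) :
    Integrable f μ :=
  ⟨hm, HasFiniteIntegral.of_bounded (C := C) (by simpa [Real.norm_eq_abs] using h)⟩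

lemma abs_integral_le_one {α : Type*} [MeasurableSpace α] (μ : Measure α) [IsProbabilityMeasure μ]
    {f : α → ℝ} (h : ∀ x, |f x| ≤ 1) : |∫ x, f x ∂μ| ≤ 1 := by
  have h2 := norm_integral_le_of_norm_le_const (μ := μ) (f := f) (C := 1)
    (Filter.Eventually.of_forall (fun x => by simpa [Real.norm_eq_abs] using h x))
  simpa [Real.norm_eq_abs] using h2

lemma measurable_eval_pair {A Z : Type*} [MeasurableSpace A] [MeasurableSpace Z] {n : ℕ}
    {ξ : A → (Fin n × Bool → Z)} (hξ : Measurable ξ) {σ : A → Bool} (hσ : Measurable σ)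
    (j : Fin n) : Measurable fun a => ξ a (j, σ a) := by
  have heq : (fun a => ξ a (j, σ a))
      = fun a => if σ a = true then ξ a (j, true) else ξ a (j, false) := by
    funext a; cases h : σ a <;> simp [h]
  rw [heq]
  exact Measurable.ite (hσ (measurableSet_singleton true))
    ((measurable_pi_apply (j, true)).comp hξ) ((measurable_pi_apply (j, false)).comp hξ)

lemma coin_singleton (b : Bool) : coin {b} = 2⁻¹ := by
  rw [coin, PMF.toMeasure_apply_singleton _ _ (measurableSet_singleton b)]
  simp [PMF.uniformOfFintype_apply]

/-- comparison `μᵢ ≤ 2 νᵢ` -/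
lemma map_le_two_smul {Z W : Type*} [MeasurableSpace Z] [MeasurableSpace W] {n : ℕ} (i : Fin n)
    (PWZS : Measure (((Fin n × Bool → Z) × (Fin n → Bool)) × W)) [IsProbabilityMeasure PWZS] :
    (PWZS.map fun x => ((x.1.1, x.1.2 i), x.2))
      ≤ (2 : ℝ≥0) • (((PWZS.map fun x => (x.1.1, x.2)).prod coin).map
          fun q => ((q.1.1, q.2), q.1.2)) := by
  have hm : Measurable fun x : ((Fin n × Bool → Z) × (Fin n → Bool)) × W => (x.1.1, x.2) :=
    (measurable_fst.comp measurable_fst).prodMk measurable_snd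
  have hgi : Measurable fun x : ((Fin n × Bool → Z) × (Fin n → Bool)) × W =>
      ((x.1.1, x.1.2 i), x.2) :=
    ((measurable_fst.comp measurable_fst).prodMk
      ((measurable_pi_apply i).comp (measurable_snd.comp measurable_fst))).prodMk measurable_snd
  have hg : Measurable fun q : ((Fin n × Bool → Z) × W) × Bool => ((q.1.1, q.2), q.1.2) :=
    ((measurable_fst.comp measurable_fst).prodMk measurable_snd).prodMk
      (measurable_snd.comp measurable_fst)
  rw [Measure.le_iff]
  intro E hE
  set PZW := PWZS.map fun x : ((Fin n × Bool → Z) × (Fin n → Bool)) × W => (x.1.1, x.2) with hPZW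
  set Bt := (fun zw : (Fin n × Bool → Z) × W => ((zw.1, true), zw.2)) ⁻¹' E with hBt
  set Bf := (fun zw : (Fin n × Bool → Z) × W => ((zw.1, false), zw.2)) ⁻¹' E with hBf
  have hBtm : MeasurableSet Bt :=
    ((measurable_fst.prodMk measurable_const).prodMk measurable_snd) hE
  have hBfm : MeasurableSet Bf :=
    ((measurable_fst.prodMk measurable_const).prodMk measurable_snd) hE
  -- RHS value
  have hgpre : (fun q : ((Fin n × Bool → Z) × W) × Bool => ((q.1.1, q.2), q.1.2)) ⁻¹' E
      = (Bt ×ˢ ({true} : Set Bool)) ∪ (Bf ×ˢ ({false} : Set Bool)) := by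
    ext ⟨zw, s⟩
    cases s <;> simp [hBt, hBf]
  have hdisj : Disjoint (Bt ×ˢ ({true} : Set Bool)) (Bf ×ˢ ({false} : Set Bool)) := by
    rw [Set.disjoint_left]
    rintro ⟨zw, s⟩ ⟨-, hs1⟩ ⟨-, hs2⟩
    simp at hs1 hs2
    rw [hs1] at hs2
    exact Bool.noConfusion hs2
  have hν : (((PZW.prod coin).map fun q => ((q.1.1, q.2), q.1.2)) E)
      = PZW Bt * 2⁻¹ + PZW Bf * 2⁻¹ := by
    rw [Measure.map_apply hg hE, hgpre,
      measure_union hdisj (hBfm.prod (measurableSet_singleton false)),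
      Measure.prod_prod, Measure.prod_prod, coin_singleton, coin_singleton]
  -- LHS bound
  have hsub : (fun x : ((Fin n × Bool → Z) × (Fin n → Bool)) × W => ((x.1.1, x.1.2 i), x.2)) ⁻¹' E
      ⊆ ((fun x : ((Fin n × Bool → Z) × (Fin n → Bool)) × W => (x.1.1, x.2)) ⁻¹' Bt)
        ∪ ((fun x : ((Fin n × Bool → Z) × (Fin n → Bool)) × W => (x.1.1, x.2)) ⁻¹' Bf) := by
    intro x hx
    rcases hb : x.1.2 i with hfalse | htrue
    · right
      simp only [Set.mem_preimage, hBf]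
      simpa [hb] using hx
    · left
      simp only [Set.mem_preimage, hBt]
      simpa [hb] using hx
  have hμ : (PWZS.map fun x => ((x.1.1, x.1.2 i), x.2)) E ≤ PZW Bt + PZW Bf := by
    rw [Measure.map_apply hgi hE, hPZW, Measure.map_apply hm hBtm, Measure.map_apply hm hBfm]
    exact le_trans (measure_mono hsub) (measure_union_le _ _)
  refine hμ.trans ?_
  have h2 : ∀ a : ℝ≥0∞, (2 : ℝ≥0∞) * (a * 2⁻¹) = a := by
    intro a
    rw [mul_comm a, ← mul_assoc, ENNReal.mul_inv_cancel (by norm_num) (by norm_num), one_mul]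
  have hsm : ∀ a b : ℝ≥0∞, (2 : ℝ≥0) • (a * 2⁻¹ + b * 2⁻¹) = a + b := by
    intro a b
    simp [ENNReal.smul_def, mul_add]
    rw [h2, h2]
  rw [Measure.smul_apply, hν, hsm]

/-- MGF bound for the prior `νᵢ` -/
lemma mgf_le_one {Z W : Type*} [MeasurableSpace Z] [MeasurableSpace W] {n : ℕ} (i : Fin n)
    (PZW : Measure ((Fin n × Bool → Z) × W)) [IsProbabilityMeasure PZW]
    (loss : W → Z → ℝ) (hlossmeas : Measurable (Function.uncurry loss))
    (hloss : ∀ w z, loss w z ∈ Set.Icc (0:ℝ) 1)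
    {lam gam : ℝ} (hlam : 0 < lam) (hgam : 0 < gam)
    (hcond : lam * (1 - gam) + (Real.exp lam - 1 - lam) * (1 + gam ^ 2) ≤ 0) :
    ∫ y, Real.exp (lam * (loss y.2 (y.1.1 (i, !y.1.2)) - gam * loss y.2 (y.1.1 (i, y.1.2))))
      ∂((PZW.prod coin).map fun q => ((q.1.1, q.2), q.1.2)) ≤ 1 := by
  have hg : Measurable fun q : ((Fin n × Bool → Z) × W) × Bool => ((q.1.1, q.2), q.1.2) :=
    ((measurable_fst.comp measurable_fst).prodMk measurable_snd).prodMk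
      (measurable_snd.comp measurable_fst)
  have hfm : Measurable fun y : ((Fin n × Bool → Z) × Bool) × W =>
      lam * (loss y.2 (y.1.1 (i, !y.1.2)) - gam * loss y.2 (y.1.1 (i, y.1.2))) := by
    have h1 : Measurable fun y : ((Fin n × Bool → Z) × Bool) × W => loss y.2 (y.1.1 (i, !y.1.2)) := by
      refine hlossmeas.comp (measurable_snd.prodMk ?_)
      exact measurable_eval_pair (measurable_fst.comp measurable_fst)
        ((measurable_from_top : Measurable not).comp (measurable_snd.comp measurable_fst)) i
    have h2 : Measurable fun y : ((Fin n × Bool → Z) × Bool) × W => loss y.2 (y.1.1 (i, y.1.2)) := by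
      refine hlossmeas.comp (measurable_snd.prodMk ?_)
      exact measurable_eval_pair (measurable_fst.comp measurable_fst)
        (measurable_snd.comp measurable_fst) i
    exact (h1.sub (h2.const_mul gam)).const_mul lam
  rw [integral_map hg.aemeasurable hfm.exp.aestronglyMeasurable]
  have hbound : ∀ q : ((Fin n × Bool → Z) × W) × Bool,
      |Real.exp (lam * (loss q.1.2 (q.1.1 (i, !q.2)) - gam * loss q.1.2 (q.1.1 (i, q.2))))|
        ≤ Real.exp (lam * (1 + gam)) := by
    intro q
    rw [abs_of_nonneg (Real.exp_nonneg _)]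
    apply Real.exp_le_exp.2
    obtain ⟨ha0, ha1⟩ := hloss q.1.2 (q.1.1 (i, !q.2))
    obtain ⟨hb0, hb1⟩ := hloss q.1.2 (q.1.1 (i, q.2))
    nlinarith [mul_nonneg hgam.le hb0]
  have hintm : Measurable fun q : ((Fin n × Bool → Z) × W) × Bool =>
      Real.exp (lam * (loss q.1.2 (q.1.1 (i, !q.2)) - gam * loss q.1.2 (q.1.1 (i, q.2)))) :=
    (hfm.comp hg).exp
  have hint : Integrable (fun q : ((Fin n × Bool → Z) × W) × Bool =>
      Real.exp (lam * (loss q.1.2 (q.1.1 (i, !q.2)) - gam * loss q.1.2 (q.1.1 (i, q.2)))))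
      (PZW.prod coin) :=
    int_of_bdd' hintm.aestronglyMeasurable (Filter.Eventually.of_forall hbound)
  rw [integral_prod _ hint]
  have hinner : ∀ zw : (Fin n × Bool → Z) × W,
      (∫ s, Real.exp (lam * (loss zw.2 (zw.1 (i, !s)) - gam * loss zw.2 (zw.1 (i, s)))) ∂coin) ≤ 1 := by
    intro zw
    have hIcoin : Integrable (fun s => Real.exp
        (lam * (loss zw.2 (zw.1 (i, !s)) - gam * loss zw.2 (zw.1 (i, s))))) coin :=
      Integrable.of_finite
    rw [integral_fintype hIcoin]
    rw [Fintype.sum_bool]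
    simp only [measureReal_def, coin_singleton]
    have htr : ((2 : ℝ≥0∞)⁻¹).toReal = 1/2 := by
      rw [ENNReal.toReal_inv]
      norm_num
    rw [htr]
    have hks := key_scalar hlam hgam hcond
      (hloss zw.2 (zw.1 (i, true))) (hloss zw.2 (zw.1 (i, false)))
    simp only [Bool.not_true, Bool.not_false, smul_eq_mul]
    linarith [hks]
  have houter : Integrable (fun zw : (Fin n × Bool → Z) × W =>
      ∫ s, Real.exp (lam * (loss zw.2 (zw.1 (i, !s)) - gam * loss zw.2 (zw.1 (i, s)))) ∂coin)
      PZW := hint.integral_prod_left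
  calc ∫ zw, (∫ s, Real.exp (lam * (loss zw.2 (zw.1 (i, !s)) - gam * loss zw.2 (zw.1 (i, s)))) ∂coin) ∂PZW
      ≤ ∫ _zw, (1:ℝ) ∂PZW :=
        integral_mono_ae houter (integrable_const 1) (Filter.Eventually.of_forall hinner)
    _ = 1 := by simp

lemma abs_mul_log_le_two {t : ℝ} (h0 : 0 ≤ t) (h2 : t ≤ 2) : |t * Real.log t| ≤ 2 := by
  rcases eq_or_lt_of_le h0 with h | h
  · simp [← h]
  rcases le_or_gt 1 t with h1 | h1
  · have hl0 : 0 ≤ Real.log t := Real.log_nonneg h1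
    have hl : Real.log t ≤ t - 1 := Real.log_le_sub_one_of_pos h
    rw [abs_of_nonneg (mul_nonneg h0 hl0)]
    nlinarith
  · have hl : Real.log t⁻¹ ≤ t⁻¹ - 1 := Real.log_le_sub_one_of_pos (by positivity)
    rw [Real.log_inv] at hl
    have hl0 : Real.log t ≤ 0 := Real.log_nonpos h0 h1.le
    rw [abs_of_nonpos (mul_nonpos_of_nonneg_of_nonpos h0 hl0)]
    have h3 : t * (-Real.log t) ≤ t * (t⁻¹ - 1) := by
      apply mul_le_mul_of_nonneg_left _ h0
      linarith
    have h4 : t * (t⁻¹ - 1) = 1 - t := by field_simp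
    nlinarith

/-- Donsker–Varadhan-type bound specialised to `E_ν[e^f] ≤ 1` and `μ ≤ 2 ν`. -/
lemma DV {α : Type*} [MeasurableSpace α] (μ ν : Measure α)
    [IsProbabilityMeasure μ] [IsProbabilityMeasure ν]
    (hle : μ ≤ (2 : ℝ≥0) • ν) (f : α → ℝ) (hf : Measurable f) (B : ℝ)
    (hfb : ∀ x, |f x| ≤ B)
    (hint : ∫ x, Real.exp (f x) ∂ν ≤ 1) :
    ∫ x, f x ∂μ ≤ klDiv' μ ν := by
  have hac : μ ≪ ν := by
    refine (Measure.absolutelyContinuous_of_le hle).trans ?_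
    refine Measure.AbsolutelyContinuous.mk (fun s _ hs => ?_)
    simp [hs]
  set ρ := μ.rnDeriv ν with hρ
  have hρm : Measurable ρ := Measure.measurable_rnDeriv μ ν
  set r : α → ℝ := fun x => (ρ x).toReal with hr
  have hrm : Measurable r := hρm.ennreal_toReal
  -- ρ ≤ 2 a.e.[ν]
  have hρ2 : ∀ᵐ x ∂ν, ρ x ≤ 2 := by
    have h1 : μ.rnDeriv ((2 : ℝ≥0) • ν) ≤ᵐ[(2 : ℝ≥0) • ν] 1 :=
      Measure.rnDeriv_le_one_of_le hle
    have h1' : μ.rnDeriv ((2 : ℝ≥0) • ν) ≤ᵐ[ν] 1 := by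
      have : ν ≪ (2 : ℝ≥0) • ν := by
        refine Measure.AbsolutelyContinuous.mk (fun s _ hs => ?_)
        simpa using hs
      exact this.ae_le h1
    have h2 : μ.rnDeriv ((2 : ℝ≥0) • ν) =ᵐ[ν] (2 : ℝ≥0)⁻¹ • μ.rnDeriv ν :=
      Measure.rnDeriv_smul_right' μ ν (by norm_num)
    filter_upwards [h1', h2] with x hx1 hx2
    rw [hx2] at hx1
    simp only [Pi.smul_apply, Pi.one_apply, smul_eq_mul] at hx1
    have hmul : (2 : ℝ≥0) • ((2 : ℝ≥0)⁻¹ • ρ x) ≤ (2 : ℝ≥0) • (1 : ℝ≥0∞) :=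
      smul_le_smul_of_nonneg_left hx1 zero_le
    rw [smul_smul, mul_inv_cancel₀ (by norm_num), one_smul] at hmul
    calc ρ x ≤ (2 : ℝ≥0) • (1 : ℝ≥0∞) := hmul
      _ = 2 := by rw [ENNReal.smul_def]; norm_num
  have hr2 : ∀ᵐ x ∂ν, r x ≤ 2 := by
    filter_upwards [hρ2] with x hx
    exact ENNReal.toReal_le_of_le_ofReal (by norm_num) (by simpa [ENNReal.ofReal_ofNat] using hx)
  have hr2μ : ∀ᵐ x ∂μ, r x ≤ 2 := hac.ae_le hr2
  have hρpos : ∀ᵐ x ∂μ, 0 < ρ x := Measure.rnDeriv_pos hac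
  have hρfin : ∀ᵐ x ∂μ, ρ x < ∞ := hac.ae_le (Measure.rnDeriv_lt_top μ ν)
  have hrpos : ∀ᵐ x ∂μ, 0 < r x := by
    filter_upwards [hρpos, hρfin] with x h1 h2
    exact ENNReal.toReal_pos h1.ne' h2.ne
  -- integrability of log r w.r.t. μ
  have hlogint : Integrable (fun x => Real.log (r x)) μ := by
    rw [← integrable_rnDeriv_smul_iff hac]
    refine int_of_bdd' ((hrm.mul (Real.measurable_log.comp hrm)).aestronglyMeasurable.congr ?_) (C := 2) ?_
    · exact Filter.Eventually.of_forall (fun x => by simp [hr, hρ, smul_eq_mul])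
    · filter_upwards [hr2] with x hx
      simpa [smul_eq_mul] using abs_mul_log_le_two ENNReal.toReal_nonneg hx
  have hfint : Integrable f μ := int_of_bdd' hf.aestronglyMeasurable (Filter.Eventually.of_forall hfb)
  -- the function h = exp f / r
  set h : α → ℝ := fun x => Real.exp (f x) / r x with hh
  have hhm : Measurable h := (Real.measurable_exp.comp hf).div hrm
  have hrh_bound : ∀ᵐ x ∂ν, |r x • h x| ≤ Real.exp B := by
    refine Filter.Eventually.of_forall (fun x => ?_)
    rcases eq_or_ne (r x) 0 with h0 | h0
    · simp only [hh, h0, smul_eq_mul, zero_mul, abs_zero]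
      positivity
    · rw [smul_eq_mul, hh]
      rw [mul_div_cancel₀ _ h0]
      rw [abs_of_nonneg (Real.exp_nonneg _)]
      exact Real.exp_le_exp.2 ((abs_le.1 (hfb x)).2)
  have hhint : Integrable h μ := by
    rw [← integrable_rnDeriv_smul_iff hac]
    exact int_of_bdd' ((hrm.smul hhm).aestronglyMeasurable) hrh_bound
  have hexpint : Integrable (fun x => Real.exp (f x)) ν :=
    int_of_bdd' (Real.measurable_exp.comp hf).aestronglyMeasurable
      (Filter.Eventually.of_forall (fun x => by
        rw [abs_of_nonneg (Real.exp_nonneg _)]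
        exact Real.exp_le_exp.2 ((abs_le.1 (hfb x)).2)))
  -- main chain
  have key : ∫ x, f x ∂μ - klDiv' μ ν ≤ 0 := by
    have h1 : ∫ x, f x ∂μ - klDiv' μ ν = ∫ x, (f x - Real.log (r x)) ∂μ :=
      (integral_sub hfint hlogint).symm
    have h2 : ∀ᵐ x ∂μ, f x - Real.log (r x) ≤ h x - 1 := by
      filter_upwards [hrpos] with x hx
      have hlog : Real.log (h x) = f x - Real.log (r x) := by
        rw [hh]
        rw [Real.log_div (Real.exp_ne_zero _) hx.ne', Real.log_exp]
      have := Real.log_le_sub_one_of_pos (show 0 < h x by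
        rw [hh]; positivity)
      rw [hlog] at this
      linarith
    have h3 : ∫ x, (f x - Real.log (r x)) ∂μ ≤ ∫ x, (h x - 1) ∂μ :=
      integral_mono_ae (hfint.sub hlogint) (hhint.sub (integrable_const 1)) h2
    have h4 : ∫ x, (h x - 1) ∂μ = ∫ x, h x ∂μ - 1 := by
      rw [integral_sub hhint (integrable_const 1)]
      simp
    have h5 : ∫ x, h x ∂μ ≤ 1 := by
      rw [← integral_rnDeriv_smul hac]
      have hle' : ∀ᵐ x ∂ν, (ρ x).toReal • h x ≤ Real.exp (f x) := by
        refine Filter.Eventually.of_forall (fun x => ?_)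
        rcases eq_or_ne (r x) 0 with h0 | h0
        · simp only [smul_eq_mul, hh]
          rw [show (ρ x).toReal = r x from rfl, h0]
          simp [Real.exp_nonneg]
        · rw [smul_eq_mul, show (ρ x).toReal = r x from rfl, hh, mul_div_cancel₀ _ h0]
      calc ∫ x, (ρ x).toReal • h x ∂ν ≤ ∫ x, Real.exp (f x) ∂ν := by
            refine integral_mono_ae ?_ hexpint hle'
            exact int_of_bdd' ((hrm.smul hhm).aestronglyMeasurable) hrh_bound
        _ ≤ 1 := hint
    linarith
  linarith [key]

/-- Ghost-coordinate lemma. -/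
lemma ghost_coord {ι Z : Type*} [Fintype ι] [DecidableEq ι] [MeasurableSpace Z]
    (PZ : Measure Z) [IsProbabilityMeasure PZ] (c : ι)
    (H : (ι → Z) → Z → ℝ)
    (hH : Measurable fun p : (ι → Z) × Z => H p.1 p.2)
    (hHb : ∀ zt z, |H zt z| ≤ 1)
    (hinv : ∀ zt y z, H (Function.update zt c y) z = H zt z) :
    ∫ zt, H zt (zt c) ∂(Measure.pi fun _ : ι => PZ)
      = ∫ zt, ∫ z, H zt z ∂PZ ∂(Measure.pi fun _ : ι => PZ) := by
  classical
  have hZne : Nonempty Z := by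
    by_contra h
    rw [not_nonempty_iff] at h
    have h1 := measure_univ (μ := PZ)
    rw [Set.univ_eq_empty_iff.2 h, measure_empty] at h1
    exact zero_ne_one h1
  obtain ⟨z₀⟩ := hZne
  set p : ι → Prop := fun j => j = c with hp
  haveI : DecidablePred p := fun j => inferInstanceAs (Decidable (j = c))
  haveI hU : Unique (Subtype p) := ⟨⟨⟨c, rfl⟩⟩, fun j => Subtype.ext j.2⟩
  have instEq : ∀ (i1 i2 : Fintype (Subtype p)),
      @Measure.pi (Subtype p) (fun _ => Z) i1 (fun _ => inferInstance) (fun _ => PZ)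
        = @Measure.pi (Subtype p) (fun _ => Z) i2 (fun _ => inferInstance) (fun _ => PZ) := by
    intro i1 i2
    rw [Subsingleton.elim i1 i2]
  set e := MeasurableEquiv.piEquivPiSubtypeProd (fun _ : ι => Z) p with he
  have hmp := measurePreserving_piEquivPiSubtypeProd (fun _ : ι => PZ) p
  set u₀ : Subtype p → Z := fun _ => z₀ with hu₀
  have euv : ∀ (u : Subtype p → Z) (v : {i : ι // ¬ p i} → Z),
      e.symm (u, v) = Function.update (e.symm (u₀, v)) c (u ⟨c, rfl⟩) := by
    intro u v
    funext j
    by_cases hj : p j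
    · have hj' : j = c := hj
      subst hj'
      simp only [he, MeasurableEquiv.piEquivPiSubtypeProd_symm_apply]
      rw [dif_pos hj, Function.update_self]
    · have hj' : j ≠ c := hj
      simp only [he, MeasurableEquiv.piEquivPiSubtypeProd_symm_apply,
        Function.update_of_ne hj', dif_neg hj]
  have ecoord : ∀ (u : Subtype p → Z) (v : {i : ι // ¬ p i} → Z),
      e.symm (u, v) c = u ⟨c, rfl⟩ := by
    intro u v
    rw [euv u v, Function.update_self]
  have hFm : Measurable fun zt : ι → Z => H zt (zt c) :=
    hH.comp (measurable_id.prodMk (measurable_pi_apply c))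
  have hGm : StronglyMeasurable fun zt : ι → Z => ∫ z, H zt z ∂PZ :=
    (hH.stronglyMeasurable).integral_prod_right'
  have hGb : ∀ zt, |∫ z, H zt z ∂PZ| ≤ 1 := by
    intro zt
    calc |∫ z, H zt z ∂PZ| ≤ ∫ z, |H zt z| ∂PZ := by
          simpa [Real.norm_eq_abs] using norm_integral_le_integral_norm (fun z => H zt z)
      _ ≤ ∫ _z, (1:ℝ) ∂PZ := by
          refine integral_mono_ae ?_ (integrable_const 1)
            (Filter.Eventually.of_forall (fun z => hHb zt z))
          have hi : Integrable (fun z => H zt z) PZ :=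
            int_of_bdd' ((hH.comp (measurable_const.prodMk measurable_id)).aestronglyMeasurable)
              (Filter.Eventually.of_forall (hHb zt))
          exact hi.abs
      _ = 1 := by simp
  have hLHS := hmp.integral_comp' (g := fun q => H (e.symm q) (e.symm q c))
  simp only [he, MeasurableEquiv.symm_apply_apply] at hLHS
  have hRHS := hmp.integral_comp' (g := fun q => ∫ z, H (e.symm q) z ∂PZ)
  simp only [he, MeasurableEquiv.symm_apply_apply] at hRHS
  refine (hLHS.trans ?_).trans hRHS.symm
  rw [instEq _ (Fintype.subtypeEq c)]
  have hΦint : Integrable (fun q : (Subtype p → Z) × ({i : ι // ¬ p i} → Z) =>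
      H (e.symm q) (e.symm q c))
      ((Measure.pi fun _ : Subtype p => PZ).prod (Measure.pi fun _ : {i : ι // ¬ p i} => PZ)) := by
    refine int_of_bdd' (C := 1) ((hFm.comp e.symm.measurable).aestronglyMeasurable) ?_
    exact Filter.Eventually.of_forall (fun q => hHb _ _)
  have hΨint : Integrable (fun q : (Subtype p → Z) × ({i : ι // ¬ p i} → Z) =>
      ∫ z, H (e.symm q) z ∂PZ)
      ((Measure.pi fun _ : Subtype p => PZ).prod (Measure.pi fun _ : {i : ι // ¬ p i} => PZ)) := by
    refine int_of_bdd' (C := 1) ((hGm.comp_measurable e.symm.measurable).aestronglyMeasurable) ?_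
    exact Filter.Eventually.of_forall (fun q => hGb _)
  have step1 : ∫ q, H (e.symm q) (e.symm q c)
        ∂((Measure.pi fun _ : Subtype p => PZ).prod (Measure.pi fun _ : {i : ι // ¬ p i} => PZ))
      = ∫ u, ∫ v, H (e.symm (u, v)) (e.symm (u, v) c)
        ∂(Measure.pi fun _ : {i : ι // ¬ p i} => PZ) ∂(Measure.pi fun _ : Subtype p => PZ) :=
    integral_prod _ hΦint
  have step2 : ∫ q, (∫ z, H (e.symm q) z ∂PZ)
        ∂((Measure.pi fun _ : Subtype p => PZ).prod (Measure.pi fun _ : {i : ι // ¬ p i} => PZ))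
      = ∫ u, ∫ v, (∫ z, H (e.symm (u, v)) z ∂PZ)
        ∂(Measure.pi fun _ : {i : ι // ¬ p i} => PZ) ∂(Measure.pi fun _ : Subtype p => PZ) :=
    integral_prod _ hΨint
  have hswap : ∫ u, ∫ v, H (e.symm (u, v)) (e.symm (u, v) c)
        ∂(Measure.pi fun _ : {i : ι // ¬ p i} => PZ) ∂(Measure.pi fun _ : Subtype p => PZ)
      = ∫ v, ∫ u, H (e.symm (u, v)) (e.symm (u, v) c)
        ∂(Measure.pi fun _ : Subtype p => PZ) ∂(Measure.pi fun _ : {i : ι // ¬ p i} => PZ) :=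
    integral_integral_swap (by exact hΦint)
  have hinner : ∀ v, ∫ u, H (e.symm (u, v)) (e.symm (u, v) c) ∂(Measure.pi fun _ : Subtype p => PZ)
      = ∫ z, H (e.symm (u₀, v)) z ∂PZ := by
    intro v
    have h1 : ∀ u : Subtype p → Z,
        H (e.symm (u, v)) (e.symm (u, v) c) = H (e.symm (u₀, v)) (u ⟨c, rfl⟩) := by
      intro u
      rw [ecoord, euv u v, hinv]
    simp_rw [h1]
    have hfu := measurePreserving_funUnique PZ (Subtype p)
    have h2 : ∀ u : Subtype p → Z,
        u ⟨c, rfl⟩ = MeasurableEquiv.funUnique (Subtype p) Z u := by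
      intro u
      have hd : (⟨c, rfl⟩ : Subtype p) = default := Subsingleton.elim _ _
      rw [hd]
      rfl
    simp_rw [h2]
    rw [instEq _ (Unique.fintype)]
    exact hfu.integral_comp' (g := fun z => H (e.symm (u₀, v)) z)
  have hinner2 : ∀ u v, ∫ z, H (e.symm (u, v)) z ∂PZ = ∫ z, H (e.symm (u₀, v)) z ∂PZ := by
    intro u v
    congr 1
    funext z
    rw [euv u v, hinv]
  have mid : ∫ v, ∫ u, H (e.symm (u, v)) (e.symm (u, v) c)
        ∂(Measure.pi fun _ : Subtype p => PZ) ∂(Measure.pi fun _ : {i : ι // ¬ p i} => PZ)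
      = ∫ u, ∫ v, (∫ z, H (e.symm (u, v)) z ∂PZ)
        ∂(Measure.pi fun _ : {i : ι // ¬ p i} => PZ) ∂(Measure.pi fun _ : Subtype p => PZ) := by
    calc ∫ v, ∫ u, H (e.symm (u, v)) (e.symm (u, v) c)
          ∂(Measure.pi fun _ : Subtype p => PZ) ∂(Measure.pi fun _ : {i : ι // ¬ p i} => PZ)
        = ∫ v, ∫ z, H (e.symm (u₀, v)) z ∂PZ ∂(Measure.pi fun _ : {i : ι // ¬ p i} => PZ) := by
          congr 1; funext v; exact hinner v
      _ = ∫ u, ∫ v, (∫ z, H (e.symm (u, v)) z ∂PZ)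
          ∂(Measure.pi fun _ : {i : ι // ¬ p i} => PZ) ∂(Measure.pi fun _ : Subtype p => PZ) := by
          have hconst : ∀ u : Subtype p → Z,
              (∫ v, (∫ z, H (e.symm (u, v)) z ∂PZ) ∂(Measure.pi fun _ : {i : ι // ¬ p i} => PZ))
              = ∫ v, (∫ z, H (e.symm (u₀, v)) z ∂PZ) ∂(Measure.pi fun _ : {i : ι // ¬ p i} => PZ) := by
            intro u; congr 1; funext v; exact hinner2 u v
          rw [integral_congr_ae (Filter.Eventually.of_forall hconst)]
          rw [integral_const]
          simp
  exact step1.trans (hswap.trans (mid.trans step2.symm))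

/-- Corollary 2: samplewise fast-rate bound on the average population loss,
in terms of the conditional mutual informations `I(W; Sᵢ | Z̃)`. -/
theorem stmt9
    {Z W : Type*} [MeasurableSpace Z] [MeasurableSpace W]
    (n : ℕ) (hn : 0 < n)
    (PZ : Measure Z) [IsProbabilityMeasure PZ]
    (loss : W → Z → ℝ) (hlossmeas : Measurable (Function.uncurry loss))
    (hloss : ∀ w z, loss w z ∈ Set.Icc (0:ℝ) 1)
    (K : Kernel ((Fin n × Bool → Z) × (Fin n → Bool)) W) [IsMarkovKernel K]
    (hK : ∀ zt s zt' s', (∀ i, zt (i, s i) = zt' (i, s' i)) → K (zt, s) = K (zt', s'))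
    (PZt : Measure ((Fin n × Bool) → Z)) (hPZt : PZt = Measure.pi fun _ => PZ)
    (PS : Measure (Fin n → Bool)) (hPS : PS = Measure.pi fun _ => coin)
    (PWZS : Measure (((Fin n × Bool → Z) × (Fin n → Bool)) × W))
    (hPWZS : PWZS = (PZt.prod PS).bind fun p => (K p).map fun w => (p, w))
    (lam gam : ℝ) (hlam : 0 < lam) (hgam : 0 < gam)
    (hcond : lam * (1 - gam) + (Real.exp lam - 1 - lam) * (1 + gam ^ 2) ≤ 0)
:
    ∫ x, popLoss PZ loss x.2 ∂PWZS ≤ gam * ∫ x, trainLoss n loss x ∂PWZS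
      + (∑ i : Fin n, klDiv'
          (PWZS.map fun x => ((x.1.1, x.1.2 i), x.2))
          (((PWZS.map fun x => (x.1.1, x.2)).prod coin).map fun q => ((q.1.1, q.2), q.1.2)))
        / (lam * n) := by
  classical
  subst hPZt
  subst hPS
  have hm : Measurable fun x : ((Fin n × Bool → Z) × (Fin n → Bool)) × W => (x.1.1, x.2) :=
    (measurable_fst.comp measurable_fst).prodMk measurable_snd
  have hbindm : Measurable fun p : (Fin n × Bool → Z) × (Fin n → Bool) =>
      (K p).map fun w => (p, w) := by
    apply Measure.measurable_of_measurable_coe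
    intro E hE
    simp_rw [Measure.map_apply measurable_prodMk_left hE]
    exact Kernel.measurable_kernel_prodMk_left hE
  have hPWZS' : PWZS = ((Measure.pi fun _ : Fin n × Bool => PZ).prod
      (Measure.pi fun _ : Fin n => coin)) ⊗ₘ K := by
    rw [hPWZS]
    refine Measure.ext fun E hE => ?_
    rw [Measure.bind_apply hE hbindm.aemeasurable, Measure.compProd_apply hE]
    refine lintegral_congr fun p => ?_
    rw [Measure.map_apply measurable_prodMk_left hE]
  haveI hprob : IsProbabilityMeasure PWZS := by
    rw [hPWZS']; infer_instance
  have hc1m : ∀ i : Fin n, Measurable fun x : ((Fin n × Bool → Z) × (Fin n → Bool)) × W =>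
      loss x.2 (x.1.1 (i, !x.1.2 i)) := fun i =>
    hlossmeas.comp (measurable_snd.prodMk (measurable_eval_pair
      (measurable_fst.comp measurable_fst)
      ((measurable_from_top : Measurable not).comp
        ((measurable_pi_apply i).comp (measurable_snd.comp measurable_fst))) i))
  have hc2m : ∀ i : Fin n, Measurable fun x : ((Fin n × Bool → Z) × (Fin n → Bool)) × W =>
      loss x.2 (x.1.1 (i, x.1.2 i)) := fun i =>
    hlossmeas.comp (measurable_snd.prodMk (measurable_eval_pair
      (measurable_fst.comp measurable_fst)
      ((measurable_pi_apply i).comp (measurable_snd.comp measurable_fst)) i))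
  have habs : ∀ w z, |loss w z| ≤ 1 := fun w z =>
    abs_le.2 ⟨by linarith [(hloss w z).1], (hloss w z).2⟩
  have hc1int : ∀ i, Integrable (fun x => loss x.2 (x.1.1 (i, !x.1.2 i))) PWZS := fun i =>
    int_of_bdd' (hc1m i).aestronglyMeasurable (Filter.Eventually.of_forall fun x => habs _ _)
  have hc2int : ∀ i, Integrable (fun x => loss x.2 (x.1.1 (i, x.1.2 i))) PWZS := fun i =>
    int_of_bdd' (hc2m i).aestronglyMeasurable (Filter.Eventually.of_forall fun x => habs _ _)
  have hpopSM : StronglyMeasurable (popLoss PZ loss) := by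
    unfold popLoss
    exact hlossmeas.stronglyMeasurable.integral_prod_right'
  have hpopb : ∀ w, |popLoss PZ loss w| ≤ 1 := fun w =>
    abs_integral_le_one PZ (fun z => habs w z)
  have hfim : ∀ i : Fin n, Measurable fun y : ((Fin n × Bool → Z) × Bool) × W =>
      lam * (loss y.2 (y.1.1 (i, !y.1.2)) - gam * loss y.2 (y.1.1 (i, y.1.2))) := by
    intro i
    have h1 : Measurable fun y : ((Fin n × Bool → Z) × Bool) × W =>
        loss y.2 (y.1.1 (i, !y.1.2)) :=
      hlossmeas.comp (measurable_snd.prodMk (measurable_eval_pair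
        (measurable_fst.comp measurable_fst)
        ((measurable_from_top : Measurable not).comp (measurable_snd.comp measurable_fst)) i))
    have h2 : Measurable fun y : ((Fin n × Bool → Z) × Bool) × W =>
        loss y.2 (y.1.1 (i, y.1.2)) :=
      hlossmeas.comp (measurable_snd.prodMk (measurable_eval_pair
        (measurable_fst.comp measurable_fst) (measurable_snd.comp measurable_fst) i))
    exact (h1.sub (h2.const_mul gam)).const_mul lam
  have hgi : ∀ i : Fin n, Measurable fun x : ((Fin n × Bool → Z) × (Fin n → Bool)) × W =>
      ((x.1.1, x.1.2 i), x.2) := fun i =>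
    ((measurable_fst.comp measurable_fst).prodMk
      ((measurable_pi_apply i).comp (measurable_snd.comp measurable_fst))).prodMk measurable_snd
  haveI hμprob : ∀ i : Fin n, IsProbabilityMeasure
      (PWZS.map fun x => ((x.1.1, x.1.2 i), x.2)) := fun i =>
    Measure.isProbabilityMeasure_map (hgi i).aemeasurable
  haveI hPZWprob : IsProbabilityMeasure (PWZS.map fun x => (x.1.1, x.2)) :=
    Measure.isProbabilityMeasure_map hm.aemeasurable
  have hgq : Measurable fun q : ((Fin n × Bool → Z) × W) × Bool => ((q.1.1, q.2), q.1.2) :=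
    ((measurable_fst.comp measurable_fst).prodMk measurable_snd).prodMk
      (measurable_snd.comp measurable_fst)
  haveI hνprob : IsProbabilityMeasure
      (((PWZS.map fun x => (x.1.1, x.2)).prod coin).map fun q => ((q.1.1, q.2), q.1.2)) :=
    Measure.isProbabilityMeasure_map hgq.aemeasurable
  -- Donsker–Varadhan step for each i
  have hDV : ∀ i : Fin n,
      ∫ x, lam * (loss x.2 (x.1.1 (i, !x.1.2 i)) - gam * loss x.2 (x.1.1 (i, x.1.2 i))) ∂PWZS
        ≤ klDiv' (PWZS.map fun x => ((x.1.1, x.1.2 i), x.2))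
            (((PWZS.map fun x => (x.1.1, x.2)).prod coin).map fun q => ((q.1.1, q.2), q.1.2)) := by
    intro i
    haveI := hμprob i
    have hmap : ∫ y, lam * (loss y.2 (y.1.1 (i, !y.1.2)) - gam * loss y.2 (y.1.1 (i, y.1.2)))
        ∂(PWZS.map fun x => ((x.1.1, x.1.2 i), x.2))
        = ∫ x, lam * (loss x.2 (x.1.1 (i, !x.1.2 i)) - gam * loss x.2 (x.1.1 (i, x.1.2 i)))
            ∂PWZS := by
      rw [integral_map (hgi i).aemeasurable (hfim i).aestronglyMeasurable]
    rw [← hmap]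
    refine DV _ _ (map_le_two_smul i PWZS) _ (hfim i) (lam * (1 + gam)) ?_ ?_
    · intro y
      obtain ⟨ha0, ha1⟩ := hloss y.2 (y.1.1 (i, !y.1.2))
      obtain ⟨hb0, hb1⟩ := hloss y.2 (y.1.1 (i, y.1.2))
      rw [abs_mul, abs_of_nonneg hlam.le]
      have habs2 : |loss y.2 (y.1.1 (i, !y.1.2)) - gam * loss y.2 (y.1.1 (i, y.1.2))|
          ≤ 1 + gam := by
        rw [abs_le]
        constructor <;> nlinarith [mul_nonneg hgam.le hb0]
      nlinarith
    · exact mgf_le_one i _ loss hlossmeas hloss hlam hgam hcond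
  -- ghost-sample step: test coordinate integrates to the population loss
  have hTi : ∀ i : Fin n,
      ∫ x, loss x.2 (x.1.1 (i, !x.1.2 i)) ∂PWZS = ∫ x, popLoss PZ loss x.2 ∂PWZS := by
    intro i
    rw [hPWZS']
    haveI : IsProbabilityMeasure (((Measure.pi fun _ : Fin n × Bool => PZ).prod
        (Measure.pi fun _ : Fin n => coin)) ⊗ₘ K) := by infer_instance
    have hf1int : Integrable (fun x : ((Fin n × Bool → Z) × (Fin n → Bool)) × W =>
        loss x.2 (x.1.1 (i, !x.1.2 i)))
        (((Measure.pi fun _ : Fin n × Bool => PZ).prod (Measure.pi fun _ : Fin n => coin)) ⊗ₘ K) :=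
      int_of_bdd' (hc1m i).aestronglyMeasurable (Filter.Eventually.of_forall fun x => habs _ _)
    rw [Measure.integral_compProd hf1int]
    have hpopint : Integrable (fun x : ((Fin n × Bool → Z) × (Fin n → Bool)) × W =>
        popLoss PZ loss x.2)
        (((Measure.pi fun _ : Fin n × Bool => PZ).prod (Measure.pi fun _ : Fin n => coin)) ⊗ₘ K) :=
      int_of_bdd' (hpopSM.measurable.comp measurable_snd).aestronglyMeasurable
        (Filter.Eventually.of_forall fun x => hpopb _)
    rw [Measure.integral_compProd hpopint]
    have hL1SM : StronglyMeasurable fun p : (Fin n × Bool → Z) × (Fin n → Bool) =>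
        ∫ w, loss w (p.1 (i, !p.2 i)) ∂K p :=
      StronglyMeasurable.integral_kernel_prod_right' (κ := K) (hc1m i).stronglyMeasurable
    have hL1b : ∀ p : (Fin n × Bool → Z) × (Fin n → Bool),
        |∫ w, loss w (p.1 (i, !p.2 i)) ∂K p| ≤ 1 := fun p =>
      abs_integral_le_one _ (fun w => habs _ _)
    have hL1int : Integrable (fun p : (Fin n × Bool → Z) × (Fin n → Bool) =>
        ∫ w, loss w (p.1 (i, !p.2 i)) ∂K p)
        ((Measure.pi fun _ : Fin n × Bool => PZ).prod (Measure.pi fun _ : Fin n => coin)) :=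
      int_of_bdd' hL1SM.aestronglyMeasurable (Filter.Eventually.of_forall hL1b)
    have hL2SM : StronglyMeasurable fun p : (Fin n × Bool → Z) × (Fin n → Bool) =>
        ∫ w, popLoss PZ loss w ∂K p :=
      StronglyMeasurable.integral_kernel_prod_right' (κ := K)
        (hpopSM.comp_measurable measurable_snd)
    have hL2int : Integrable (fun p : (Fin n × Bool → Z) × (Fin n → Bool) =>
        ∫ w, popLoss PZ loss w ∂K p)
        ((Measure.pi fun _ : Fin n × Bool => PZ).prod (Measure.pi fun _ : Fin n => coin)) :=
      int_of_bdd' hL2SM.aestronglyMeasurable (Filter.Eventually.of_forall fun p =>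
        abs_integral_le_one _ (fun w => hpopb _))
    rw [integral_prod_symm _ hL1int, integral_prod_symm _ hL2int]
    refine integral_congr_ae (Filter.Eventually.of_forall fun s => ?_)
    show (∫ zt, ∫ w, loss w (zt (i, !s i)) ∂K (zt, s) ∂(Measure.pi fun _ : Fin n × Bool => PZ))
        = ∫ zt, ∫ w, popLoss PZ loss w ∂K (zt, s) ∂(Measure.pi fun _ : Fin n × Bool => PZ)
    haveI hcm : IsMarkovKernel (K.comap (fun q : (Fin n × Bool → Z) × Z => (q.1, s))
        (measurable_fst.prodMk measurable_const)) :=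
      Kernel.IsMarkovKernel.comap K
        ((measurable_fst.prodMk measurable_const :
          Measurable fun q : (Fin n × Bool → Z) × Z => (q.1, s)))
    have hHm : Measurable fun q : (Fin n × Bool → Z) × Z => ∫ w, loss w q.2 ∂K (q.1, s) := by
      have hsm := StronglyMeasurable.integral_kernel_prod_right'
        (κ := K.comap (fun q : (Fin n × Bool → Z) × Z => (q.1, s))
          (measurable_fst.prodMk measurable_const))
        (f := fun qw : ((Fin n × Bool → Z) × Z) × W => loss qw.2 qw.1.2)
        ((hlossmeas.comp (measurable_snd.prodMk
          (measurable_snd.comp measurable_fst))).stronglyMeasurable)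
      simp_rw [Kernel.comap_apply] at hsm
      exact hsm.measurable
    have hHb : ∀ zt z, |∫ w, loss w z ∂K (zt, s)| ≤ 1 := fun zt z =>
      abs_integral_le_one _ (fun w => habs _ _)
    have hinv : ∀ (zt : Fin n × Bool → Z) (y z : Z),
        (∫ w, loss w z ∂K (Function.update zt (i, !s i) y, s)) = ∫ w, loss w z ∂K (zt, s) := by
      intro zt y z
      have hKeq : K (Function.update zt (i, !s i) y, s) = K (zt, s) := by
        apply hK
        intro j
        apply Function.update_of_ne
        intro hcontra
        simp only [Prod.mk.injEq] at hcontra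
        obtain ⟨h1, h2⟩ := hcontra
        subst h1
        simp at h2
      rw [hKeq]
    have hg := ghost_coord PZ ((i, !s i) : Fin n × Bool)
      (fun zt z => ∫ w, loss w z ∂K (zt, s)) hHm hHb hinv
    refine Eq.trans (by exact hg) ?_
    refine integral_congr_ae (Filter.Eventually.of_forall fun zt => ?_)
    show (∫ z, ∫ w, loss w z ∂K (zt, s) ∂PZ) = ∫ w, popLoss PZ loss w ∂K (zt, s)
    have hswint : Integrable (Function.uncurry fun z w => loss w z) (PZ.prod (K (zt, s))) :=
      int_of_bdd' (hlossmeas.comp (measurable_snd.prodMk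
        measurable_fst)).aestronglyMeasurable (Filter.Eventually.of_forall fun q => habs _ _)
    exact integral_integral_swap hswint
  -- expectation identity per i
  have hsum : ∀ i : Fin n,
      ∫ x, lam * (loss x.2 (x.1.1 (i, !x.1.2 i)) - gam * loss x.2 (x.1.1 (i, x.1.2 i))) ∂PWZS
        = lam * ((∫ x, popLoss PZ loss x.2 ∂PWZS)
            - gam * ∫ x, loss x.2 (x.1.1 (i, x.1.2 i)) ∂PWZS) := by
    intro i
    rw [integral_const_mul, integral_sub (hc1int i) ((hc2int i).const_mul gam),
      integral_const_mul, hTi i]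
  have htrain : ∫ x, trainLoss n loss x ∂PWZS
      = (∑ i : Fin n, ∫ x, loss x.2 (x.1.1 (i, x.1.2 i)) ∂PWZS) / n := by
    unfold trainLoss
    rw [integral_div]
    congr 1
    exact integral_finset_sum _ (fun i _ => hc2int i)
  have hmain : (∑ i : Fin n, lam * ((∫ x, popLoss PZ loss x.2 ∂PWZS)
        - gam * ∫ x, loss x.2 (x.1.1 (i, x.1.2 i)) ∂PWZS))
      ≤ ∑ i : Fin n, klDiv' (PWZS.map fun x => ((x.1.1, x.1.2 i), x.2))
          (((PWZS.map fun x => (x.1.1, x.2)).prod coin).map fun q => ((q.1.1, q.2), q.1.2)) := by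
    refine Finset.sum_le_sum fun i _ => ?_
    rw [← hsum i]
    exact hDV i
  rw [htrain]
  have hsumval : (∑ i : Fin n, lam * ((∫ x, popLoss PZ loss x.2 ∂PWZS)
        - gam * ∫ x, loss x.2 (x.1.1 (i, x.1.2 i)) ∂PWZS))
      = lam * ((n : ℝ) * (∫ x, popLoss PZ loss x.2 ∂PWZS)
        - gam * ∑ i : Fin n, ∫ x, loss x.2 (x.1.1 (i, x.1.2 i)) ∂PWZS) := by
    rw [← Finset.mul_sum]
    congr 1
    rw [Finset.sum_sub_distrib, Finset.sum_const, Finset.card_univ, Fintype.card_fin,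
      nsmul_eq_mul, Finset.mul_sum]
  have hineq := hsumval ▸ hmain
  have hn' : (0:ℝ) < (n:ℝ) := by exact_mod_cast hn
  have hln : 0 < lam * (n:ℝ) := by positivity
  have h1 : (∫ x, popLoss PZ loss x.2 ∂PWZS)
      - gam * ((∑ i : Fin n, ∫ x, loss x.2 (x.1.1 (i, x.1.2 i)) ∂PWZS) / n)
      ≤ (∑ i : Fin n, klDiv' (PWZS.map fun x => ((x.1.1, x.1.2 i), x.2))
          (((PWZS.map fun x => (x.1.1, x.2)).prod coin).map fun q => ((q.1.1, q.2), q.1.2)))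
        / (lam * n) := by
    rw [le_div_iff₀ hln]
    calc ((∫ x, popLoss PZ loss x.2 ∂PWZS)
          - gam * ((∑ i : Fin n, ∫ x, loss x.2 (x.1.1 (i, x.1.2 i)) ∂PWZS) / n)) * (lam * n)
        = lam * ((n : ℝ) * (∫ x, popLoss PZ loss x.2 ∂PWZS)
            - gam * ∑ i : Fin n, ∫ x, loss x.2 (x.1.1 (i, x.1.2 i)) ∂PWZS) := by
          field_simp
      _ ≤ _ := hineq
  linarith
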